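/- arXiv:2309.00370 — 3 statements merged into one kernel-verified Lean document; each statement's English description precedes it below -/
import Mathlib

section
/- For a < b, the union over all c > a and d < b of the classes I(c,d) equals the class I_o(a,b). In particular, φ ∈ I_o(a,b) if and only if there exists ε > 0 such that λ^{a+ε} ≲ φ(λt)/φ(t) ≲ λ^{b−ε} for all t > 0 and λ ≥ 1. -/
open Real MeasureTheory Set Filter ENNReal

/-- `s_φ(λ) = sup_{t>0} φ(λt)/φ(t)`, valued in `[0,∞]`. -/
noncomputable def sPhi (φ : ℝ → ℝ) (l : ℝ) : ℝ≥0∞ :=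
  ⨆ t ∈ Set.Ioi (0:ℝ), ENNReal.ofReal (φ (l * t) / φ t)

/-- `φ ∈ I(a,b)`: `s_φ(λ) = O(λ^a)` as `λ → 0` and `s_φ(λ) = O(λ^b)` as `λ → ∞`. -/
def memI (φ : ℝ → ℝ) (a b : ℝ) : Prop :=
  (∃ C > (0:ℝ), ∃ δ > (0:ℝ), ∀ l : ℝ, 0 < l → l < δ →
    sPhi φ l ≤ ENNReal.ofReal (C * l ^ a)) ∧
  (∃ C > (0:ℝ), ∃ M : ℝ, ∀ l : ℝ, M < l →
    sPhi φ l ≤ ENNReal.ofReal (C * l ^ b))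

/-- `φ ∈ I_o(a,b)`: `s_φ(λ) = o(λ^a)` as `λ → 0` and `s_φ(λ) = o(λ^b)` as `λ → ∞`. -/
def memIo (φ : ℝ → ℝ) (a b : ℝ) : Prop :=
  (∀ ε > (0:ℝ), ∃ δ > (0:ℝ), ∀ l : ℝ, 0 < l → l < δ →
    sPhi φ l ≤ ENNReal.ofReal (ε * l ^ a)) ∧
  (∀ ε > (0:ℝ), ∃ M : ℝ, ∀ l : ℝ, M < l →
    sPhi φ l ≤ ENNReal.ofReal (ε * l ^ b))

/-! The function `s = s_φ` is submultiplicative on `(0,∞)`, and `λ ↦ s(λ⁻¹)` is too, which turns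
every statement about `λ → 0` into one about `λ → ∞`. If `s(L) ≤ ½ L^b` for one `L > 1`, then
`s(Lⁿ) ≤ 2⁻ⁿ L^{nb} = (Lⁿ)^{b-η}` with `L^η = 2`, and writing an arbitrary large `λ` as `μ Lⁿ`
with `μ ∈ [L, L²)` gives `s(λ) ≲ λ^{b-η}`: a little-o bound improves the exponent. Conversely,
factoring `λ = (λR) R⁻¹` with `R` large turns the eventual bounds of `I(c,d)` into bounds valid
for all `λ ≥ 1`, which are the pointwise two-sided estimates. -/

open Topology

lemma exists_forall_gt_iff_eventually_atTop {P : ℝ → Prop} :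
    (∃ M : ℝ, ∀ l : ℝ, M < l → P l) ↔ ∀ᶠ l in atTop, P l := by
  simp only [atTop_basis_Ioi.eventually_iff, true_and, mem_Ioi]

lemma exists_forall_lt_iff_eventually_atTop_inv {f : ℝ → ℝ≥0∞} {C a : ℝ} :
    (∃ δ > (0:ℝ), ∀ l : ℝ, 0 < l → l < δ → f l ≤ ENNReal.ofReal (C * l ^ a)) ↔
      ∀ᶠ l in atTop, f l⁻¹ ≤ ENNReal.ofReal (C * l ^ (-a)) := by
  have hinv : ∀ᶠ l : ℝ in atTop, (l⁻¹) ^ a = l ^ (-a) :=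
    (eventually_gt_atTop 0).mono fun l hl => by rw [Real.inv_rpow hl.le, Real.rpow_neg hl.le]
  calc (∃ δ > (0:ℝ), ∀ l : ℝ, 0 < l → l < δ → f l ≤ ENNReal.ofReal (C * l ^ a))
      ↔ ∀ᶠ l in 𝓝[>] 0, f l ≤ ENNReal.ofReal (C * l ^ a) := by
        simp only [(nhdsGT_basis (0:ℝ)).eventually_iff, gt_iff_lt, mem_Ioo, and_imp]
    _ ↔ ∀ᶠ l in atTop, f l⁻¹ ≤ ENNReal.ofReal (C * (l⁻¹) ^ a) := by
        rw [← inv_atTop₀, eventually_inv]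
    _ ↔ _ := eventually_congr (hinv.mono fun l hl => by rw [hl])

lemma eventually_le_rpow_of_lt {f : ℝ → ℝ≥0∞} {C d b : ℝ} (hdb : d < b)
    (h : ∀ᶠ l in atTop, f l ≤ ENNReal.ofReal (C * l ^ d)) {ε : ℝ} (hε : 0 < ε) :
    ∀ᶠ l in atTop, f l ≤ ENNReal.ofReal (ε * l ^ b) := by
  have hsmall : Tendsto (fun l : ℝ => C * l ^ (d - b)) atTop (𝓝 0) := by
    simpa [neg_sub] using (tendsto_rpow_neg_atTop (sub_pos.2 hdb)).const_mul C
  filter_upwards [h, hsmall.eventually (ge_mem_nhds hε), eventually_gt_atTop 0]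
    with l hl hCl hl0
  refine hl.trans (ENNReal.ofReal_le_ofReal ?_)
  calc C * l ^ d = C * l ^ (d - b) * l ^ b := by
        rw [mul_assoc, ← Real.rpow_add hl0, sub_add_cancel]
    _ ≤ ε * l ^ b := by gcongr

lemma exists_mem_Ico_eq_mul_pow_succ {L l : ℝ} (hL : 1 < L) (hl : L ^ 2 ≤ l) :
    ∃ μ ∈ Ico L (L ^ 2), ∃ n : ℕ, l = μ * L ^ (n + 1) := by
  have hL0 : 0 < L := one_pos.trans hL
  obtain ⟨n, hn, hn'⟩ := exists_nat_pow_near ((one_le_div (by positivity)).2 hl) hL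
  have hLn : 0 < L ^ (n + 1) := by positivity
  refine ⟨l / L ^ (n + 1), ⟨?_, ?_⟩, n, (div_mul_cancel₀ _ hLn.ne').symm⟩
  · rw [le_div_iff₀ hLn]
    rw [le_div_iff₀ (by positivity)] at hn
    calc L * L ^ (n + 1) = L ^ n * L ^ 2 := by ring
      _ ≤ l := hn
  · rw [div_lt_iff₀ hLn]
    rw [div_lt_iff₀ (by positivity)] at hn'
    calc l < L ^ (n + 1) * L ^ 2 := hn'
      _ = L ^ 2 * L ^ (n + 1) := mul_comm _ _

lemma inv_le_mul_inv_iff {r x C : ℝ} (hr : 0 < r) (hx : 0 < x) :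
    r⁻¹ ≤ C * x⁻¹ ↔ x ≤ C * r := by
  rw [← div_eq_mul_inv, le_div_iff₀ hx, ← div_eq_inv_mul, div_le_iff₀ hr]

def SubmultiplicativeOnPos (f : ℝ → ℝ≥0∞) : Prop :=
  ∀ ⦃x y : ℝ⦄, 0 < x → 0 < y → f (x * y) ≤ f x * f y

namespace SubmultiplicativeOnPos

variable {f : ℝ → ℝ≥0∞}

lemma comp_inv (hf : SubmultiplicativeOnPos f) : SubmultiplicativeOnPos fun x => f x⁻¹ := fun x y hx hy => by
  simpa only [mul_inv] using hf (inv_pos.2 hx) (inv_pos.2 hy)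

lemma pow_succ_le (hf : SubmultiplicativeOnPos f) {x : ℝ} (hx : 0 < x) (n : ℕ) :
    f (x ^ (n + 1)) ≤ f x ^ (n + 1) := by
  induction n with
  | zero => simp
  | succ n ih =>
    calc f (x ^ (n + 1 + 1)) = f (x ^ (n + 1) * x) := by rw [pow_succ]
      _ ≤ f (x ^ (n + 1)) * f x := hf (pow_pos hx _) hx
      _ ≤ f x ^ (n + 1) * f x := by gcongr
      _ = f x ^ (n + 1 + 1) := (pow_succ _ _).symm

lemma pow_succ_le_rpow (hf : SubmultiplicativeOnPos f) {x p : ℝ} (hx : 0 < x)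
    (h : f x ≤ ENNReal.ofReal (x ^ p)) (n : ℕ) :
    f (x ^ (n + 1)) ≤ ENNReal.ofReal ((x ^ (n + 1)) ^ p) := by
  calc f (x ^ (n + 1)) ≤ ENNReal.ofReal (x ^ p) ^ (n + 1) := (hf.pow_succ_le hx n).trans (by gcongr)
    _ = ENNReal.ofReal ((x ^ (n + 1)) ^ p) := by
      rw [← ENNReal.ofReal_pow (by positivity), Real.rpow_pow_comm hx.le]

lemma exists_lt_eventually_le_rpow (hf : SubmultiplicativeOnPos f) {b : ℝ}
    (h : ∀ᶠ l in atTop, f l ≤ ENNReal.ofReal (2⁻¹ * l ^ b)) :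
    ∃ d < b, ∀ᶠ l in atTop, f l ≤ ENNReal.ofReal (2 * l ^ d) := by
  obtain ⟨L, hLb, hL⟩ := ((eventually_forall_ge_atTop.2 h).and (eventually_gt_atTop 1)).exists
  have hL0 : 0 < L := one_pos.trans hL
  set η := logb L 2
  have hη : 0 < η := logb_pos hL one_lt_two
  have hLη : L ^ η = 2 := rpow_logb hL0 hL.ne' two_pos
  have hpow : ∀ n : ℕ, f (L ^ (n + 1)) ≤ ENNReal.ofReal ((L ^ (n + 1)) ^ (b - η)) := by
    refine hf.pow_succ_le_rpow hL0 ((hLb L le_rfl).trans_eq ?_)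
    rw [Real.rpow_sub hL0, hLη, inv_mul_eq_div]
  refine ⟨b - η, by linarith, (eventually_ge_atTop (L ^ 2)).mono fun l hl => ?_⟩
  obtain ⟨μ, ⟨hLμ, hμL⟩, n, rfl⟩ := exists_mem_Ico_eq_mul_pow_succ hL hl
  have hμ0 : 0 < μ := hL0.trans_le hLμ
  calc f (μ * L ^ (n + 1)) ≤ f μ * f (L ^ (n + 1)) := hf hμ0 (by positivity)
    _ ≤ ENNReal.ofReal (2⁻¹ * μ ^ b) * ENNReal.ofReal ((L ^ (n + 1)) ^ (b - η)) :=
        mul_le_mul' (hLb μ hLμ) (hpow n)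
    _ = ENNReal.ofReal (2⁻¹ * μ ^ η * (μ * L ^ (n + 1)) ^ (b - η)) := by
        rw [← ENNReal.ofReal_mul (by positivity), Real.mul_rpow hμ0.le (by positivity),
          Real.rpow_sub hμ0]
        field_simp
    _ ≤ ENNReal.ofReal (2 * (μ * L ^ (n + 1)) ^ (b - η)) := by
        have : μ ^ η ≤ 4 := by
          calc μ ^ η ≤ (L ^ 2) ^ η := by gcongr
            _ = 4 := by rw [← Real.rpow_pow_comm hL0.le, hLη]; norm_num
        gcongr
        linarith

lemma exists_forall_one_le_le_rpow (hf : SubmultiplicativeOnPos f) {C₀ C₁ d e : ℝ} (hC₀ : 0 ≤ C₀)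
    (htop : ∀ᶠ l in atTop, f l ≤ ENNReal.ofReal (C₁ * l ^ d))
    (hzero : ∀ᶠ l in atTop, f l⁻¹ ≤ ENNReal.ofReal (C₀ * l ^ e)) :
    ∃ K : ℝ, ∀ l : ℝ, 1 ≤ l → f l ≤ ENNReal.ofReal (K * l ^ d) := by
  obtain ⟨R, ⟨hRtop, hRzero⟩, hR⟩ :=
    (((eventually_forall_ge_atTop.2 htop).and hzero).and (eventually_gt_atTop 0)).exists
  refine ⟨C₁ * R ^ d * (C₀ * R ^ e), fun l hl => ?_⟩
  have hl0 : 0 < l := one_pos.trans_le hl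
  calc f l = f (l * R * R⁻¹) := by rw [mul_inv_cancel_right₀ hR.ne']
    _ ≤ f (l * R) * f R⁻¹ := hf (by positivity) (inv_pos.2 hR)
    _ ≤ ENNReal.ofReal (C₁ * (l * R) ^ d) * ENNReal.ofReal (C₀ * R ^ e) :=
        mul_le_mul' (hRtop _ (le_mul_of_one_le_left hR.le hl)) hRzero
    _ = ENNReal.ofReal (C₁ * R ^ d * (C₀ * R ^ e) * l ^ d) := by
        rw [← ENNReal.ofReal_mul' (by positivity), Real.mul_rpow hl0.le hR.le]
        ring_nf

end SubmultiplicativeOnPos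

section sPhi

variable {φ : ℝ → ℝ}

lemma ofReal_div_le_sPhi {l t : ℝ} (ht : 0 < t) :
    ENNReal.ofReal (φ (l * t) / φ t) ≤ sPhi φ l :=
  le_biSup (fun t => ENNReal.ofReal (φ (l * t) / φ t)) ht

lemma sPhi_le_ofReal {l B : ℝ} (h : ∀ t : ℝ, 0 < t → φ (l * t) / φ t ≤ B) :
    sPhi φ l ≤ ENNReal.ofReal B :=
  iSup₂_le fun t ht => ENNReal.ofReal_le_ofReal (h t ht)

variable (hφ : ∀ t ∈ Ioi (0:ℝ), 0 < φ t)
include hφ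

lemma div_le_of_sPhi_le {l t y : ℝ} (hl : 0 < l) (ht : 0 < t)
    (h : sPhi φ l ≤ ENNReal.ofReal y) : φ (l * t) / φ t ≤ y := by
  have hpos : 0 < φ (l * t) / φ t := div_pos (hφ _ (mul_pos hl ht)) (hφ t ht)
  exact ((ENNReal.ofReal_le_ofReal_iff').1 ((ofReal_div_le_sPhi ht).trans h)).resolve_right
    hpos.not_ge

lemma submultiplicativeOnPos_sPhi : SubmultiplicativeOnPos (sPhi φ) := by
  intro x y hx hy
  refine iSup₂_le fun t ht => ?_
  have hyt : 0 < y * t := mul_pos hy ht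
  have hsplit : φ (x * y * t) / φ t = φ (x * (y * t)) / φ (y * t) * (φ (y * t) / φ t) := by
    rw [mul_assoc, div_mul_div_cancel₀ (hφ _ hyt).ne']
  rw [hsplit, ENNReal.ofReal_mul (div_pos (hφ _ (mul_pos hx hyt)) (hφ _ hyt)).le]
  exact mul_le_mul' (ofReal_div_le_sPhi hyt) (ofReal_div_le_sPhi ht)

end sPhi

lemma memI_iff_eventually_atTop {φ : ℝ → ℝ} {c d : ℝ} :
    memI φ c d ↔
      (∃ C > (0:ℝ), ∀ᶠ l in atTop, sPhi φ l⁻¹ ≤ ENNReal.ofReal (C * l ^ (-c))) ∧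
      (∃ C > (0:ℝ), ∀ᶠ l in atTop, sPhi φ l ≤ ENNReal.ofReal (C * l ^ d)) := by
  simp only [memI, exists_forall_lt_iff_eventually_atTop_inv,
    exists_forall_gt_iff_eventually_atTop]

lemma memIo_iff_eventually_atTop {φ : ℝ → ℝ} {a b : ℝ} :
    memIo φ a b ↔
      (∀ ε > (0:ℝ), ∀ᶠ l in atTop, sPhi φ l⁻¹ ≤ ENNReal.ofReal (ε * l ^ (-a))) ∧
      (∀ ε > (0:ℝ), ∀ᶠ l in atTop, sPhi φ l ≤ ENNReal.ofReal (ε * l ^ b)) := by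
  simp only [memIo, exists_forall_lt_iff_eventually_atTop_inv,
    exists_forall_gt_iff_eventually_atTop]

section ratio

variable {φ : ℝ → ℝ} (hφ : ∀ t ∈ Ioi (0:ℝ), 0 < φ t)
include hφ

lemma memIo_iff_exists_memI {a b : ℝ} :
    memIo φ a b ↔ ∃ c d : ℝ, a < c ∧ d < b ∧ memI φ c d := by
  have hs := submultiplicativeOnPos_sPhi hφ
  simp only [memIo_iff_eventually_atTop, memI_iff_eventually_atTop]
  constructor
  · rintro ⟨hzero, htop⟩
    obtain ⟨c', hc', hc'bound⟩ := hs.comp_inv.exists_lt_eventually_le_rpow (hzero 2⁻¹ (by norm_num))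
    obtain ⟨d, hd, hdbound⟩ := hs.exists_lt_eventually_le_rpow (htop 2⁻¹ (by norm_num))
    exact ⟨-c', d, by linarith, hd, ⟨2, two_pos, by simpa only [neg_neg] using hc'bound⟩,
      ⟨2, two_pos, hdbound⟩⟩
  · rintro ⟨c, d, hac, hdb, ⟨C₀, -, hzero⟩, ⟨C₁, -, htop⟩⟩
    exact ⟨fun ε hε => eventually_le_rpow_of_lt (neg_lt_neg hac) hzero hε,
      fun ε hε => eventually_le_rpow_of_lt hdb htop hε⟩

lemma memI.exists_ratio_bounds {a b c d : ℝ} (h : memI φ c d) (hac : a < c) (hdb : d < b) :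
    ∃ ε > (0:ℝ), ∃ C > (0:ℝ), ∀ t ∈ Ioi (0:ℝ), ∀ l : ℝ, 1 ≤ l →
      l ^ (a + ε) ≤ C * (φ (l * t) / φ t) ∧ φ (l * t) / φ t ≤ C * l ^ (b - ε) := by
  have hs := submultiplicativeOnPos_sPhi hφ
  obtain ⟨⟨C₀, hC₀, hzero⟩, ⟨C₁, hC₁, htop⟩⟩ := memI_iff_eventually_atTop.1 h
  obtain ⟨K, hK⟩ := hs.exists_forall_one_le_le_rpow hC₀.le htop hzero
  obtain ⟨K', hK'⟩ := hs.comp_inv.exists_forall_one_le_le_rpow hC₁.le hzero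
    (by simpa only [inv_inv] using htop)
  refine ⟨min (c - a) (b - d), lt_min (by linarith) (by linarith), max (max K K') 1,
    by positivity, fun t ht l hl => ?_⟩
  have ht : 0 < t := ht
  have hl0 : 0 < l := one_pos.trans_le hl
  have hlt : 0 < l * t := mul_pos hl0 ht
  have hr : 0 < φ (l * t) / φ t := div_pos (hφ _ hlt) (hφ t ht)
  have hKC : K ≤ max (max K K') 1 := (le_max_left _ _).trans (le_max_left _ _)
  have hK'C : K' ≤ max (max K K') 1 := (le_max_right _ _).trans (le_max_left _ _)
  constructor
  · have hinv : (φ (l * t) / φ t)⁻¹ ≤ K' * (l ^ c)⁻¹ := by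
      rw [inv_div, ← Real.rpow_neg hl0.le]
      simpa only [inv_mul_cancel_left₀ hl0.ne'] using
        div_le_of_sPhi_le hφ (inv_pos.2 hl0) hlt (hK' l hl)
    calc l ^ (a + min (c - a) (b - d)) ≤ l ^ c :=
          Real.rpow_le_rpow_of_exponent_le hl (by linarith [min_le_left (c - a) (b - d)])
      _ ≤ K' * (φ (l * t) / φ t) := (inv_le_mul_inv_iff hr (by positivity)).1 hinv
      _ ≤ max (max K K') 1 * (φ (l * t) / φ t) := by gcongr
  · calc φ (l * t) / φ t ≤ K * l ^ d := div_le_of_sPhi_le hφ hl0 ht (hK l hl)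
      _ ≤ max (max K K') 1 * l ^ d := by gcongr
      _ ≤ max (max K K') 1 * l ^ (b - min (c - a) (b - d)) := by
          gcongr
          linarith [min_le_right (c - a) (b - d)]

lemma memI_of_ratio_bounds {a b ε C : ℝ} (hC : 0 < C)
    (h : ∀ t ∈ Ioi (0:ℝ), ∀ l : ℝ, 1 ≤ l →
      l ^ (a + ε) ≤ C * (φ (l * t) / φ t) ∧ φ (l * t) / φ t ≤ C * l ^ (b - ε)) :
    memI φ (a + ε) (b - ε) := by
  refine memI_iff_eventually_atTop.2 ⟨⟨C, hC, (eventually_ge_atTop 1).mono fun l hl => ?_⟩,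
    ⟨C, hC, (eventually_ge_atTop 1).mono fun l hl =>
      sPhi_le_ofReal fun t ht => (h t ht l hl).2⟩⟩
  have hl0 : 0 < l := one_pos.trans_le hl
  refine sPhi_le_ofReal fun t ht => ?_
  have hu : 0 < l⁻¹ * t := mul_pos (inv_pos.2 hl0) ht
  have hlu : l * (l⁻¹ * t) = t := mul_inv_cancel_left₀ hl0.ne' t
  have hbound := (h _ hu l hl).1
  rw [hlu] at hbound
  rw [Real.rpow_neg hl0.le, ← inv_div]
  exact (inv_le_mul_inv_iff (div_pos (hφ t ht) (hφ _ hu)) (by positivity)).2 hbound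

end ratio

theorem memIo_iff_union_memI_general (a b : ℝ)
    (φ : ℝ → ℝ) (hφ : ∀ t ∈ Set.Ioi (0:ℝ), 0 < φ t) :
    (memIo φ a b ↔ ∃ c d : ℝ, a < c ∧ d < b ∧ memI φ c d) ∧
    (memIo φ a b ↔ ∃ ε > (0:ℝ), ∃ C > (0:ℝ), ∀ t ∈ Set.Ioi (0:ℝ), ∀ l : ℝ, 1 ≤ l →
      l ^ (a + ε) ≤ C * (φ (l * t) / φ t) ∧ φ (l * t) / φ t ≤ C * l ^ (b - ε)) := by
  refine ⟨memIo_iff_exists_memI hφ, (memIo_iff_exists_memI hφ).trans ⟨?_, ?_⟩⟩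
  · rintro ⟨c, d, hac, hdb, h⟩
    exact h.exists_ratio_bounds hφ hac hdb
  · rintro ⟨ε, hε, C, hC, h⟩
    exact ⟨a + ε, b - ε, by linarith, by linarith, memI_of_ratio_bounds hφ hC h⟩

/-- for `a < b`, `⋃_{c>a, d<b} I(c,d) = I_o(a,b)`; in particular
`φ ∈ I_o(a,b)` iff there is `ε > 0` with `λ^{a+ε} ≲ φ(λt)/φ(t) ≲ λ^{b-ε}`
for all `t > 0`, `λ ≥ 1`. -/
theorem memIo_iff_union_memI (a b : ℝ) (hab : a < b)
    (φ : ℝ → ℝ) (hφ : ∀ t ∈ Set.Ioi (0:ℝ), 0 < φ t) :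
    (memIo φ a b ↔ ∃ c d : ℝ, a < c ∧ d < b ∧ memI φ c d) ∧
    (memIo φ a b ↔ ∃ ε > (0:ℝ), ∃ C > (0:ℝ), ∀ t ∈ Set.Ioi (0:ℝ), ∀ l : ℝ, 1 ≤ l →
      l ^ (a + ε) ≤ C * (φ (l * t) / φ t) ∧ φ (l * t) / φ t ≤ C * l ^ (b - ε)) :=
  memIo_iff_union_memI_general a b φ hφ
end

section
/- If κ: (0,∞) → (0,∞) belongs to I_o(−1,0), then its Laplace transform L[κ](λ) = ∫_0^∞ e^{−λt} κ(t) dt is finite for all λ > 0 and satisfies L[κ](λ) ≃ κ(λ^{−1})/λ, with equivalence constants uniform in λ. -/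
/-!
Call `κ (s * t) ≤ c * κ t` for all `t > 0` a dilation bound `DilationLE κ s c`; for positive `κ`
it says `s_κ(s) ≤ c`, and such bounds compose multiplicatively. The hypothesis gives dilation
bounds `c = s⁻¹ / 2` for small `s` and `c = 1` for large `s`, hence a uniform bound for all
`s ≥ 1`. Iterating the small-scale bound at a fixed `a` and interpolating with the `s ≥ 1` bound
upgrades it to `κ (s * t) ≲ s ^ (ρ - 1) * κ t` on `(0, 1]` with some `ρ > 0`.

Split the Laplace integral at `T = λ⁻¹`. On `(0, T]` the power bound gives `∫ κ ≲ T κ(T)`; on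
`(T, ∞)` we have `κ ≲ κ(T)` and `∫ e^{-λt} ≤ λ⁻¹`. For the lower bound, on `(0, T]` both
`e^{-λt} ≥ e^{-1}` and `κ(t) ≳ κ(T)`.
-/

open Real MeasureTheory Set Filter ENNReal

theorem lintegral_Ioc_div_rpow {T ρ : ℝ} (hT : 0 < T) (hρ : 0 < ρ) :
    ∫⁻ t in Ioc 0 T, ENNReal.ofReal ((t / T) ^ (ρ - 1)) = ENNReal.ofReal (T / ρ) := by
  have hrpow : ∀ t ∈ Ioc 0 T, (t / T) ^ (ρ - 1) = t ^ (ρ - 1) / T ^ (ρ - 1) :=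
    fun t ht => Real.div_rpow ht.1.le hT.le _
  have hint : IntegrableOn (fun t => t ^ (ρ - 1) / T ^ (ρ - 1)) (Ioc 0 T) :=
    (intervalIntegrable_iff_integrableOn_Ioc_of_le hT.le).mp
      ((intervalIntegral.intervalIntegrable_rpow' (by linarith)).div_const _)
  rw [setLIntegral_congr_fun measurableSet_Ioc (fun t ht => by rw [hrpow t ht]),
    ← ofReal_integral_eq_lintegral_ofReal hint
      (ae_restrict_of_forall_mem measurableSet_Ioc fun t ht => by
        have := ht.1; positivity),
    ← intervalIntegral.integral_of_le hT.le, intervalIntegral.integral_div,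
    integral_rpow (Or.inl (by linarith)), sub_add_cancel, Real.zero_rpow hρ.ne', sub_zero,
    Real.rpow_sub_one hT.ne']
  congr 1
  field_simp

theorem setLIntegral_Ioc_le_of_le_mul_div_rpow {f : ℝ → ℝ} {T ρ c : ℝ} (hT : 0 < T) (hρ : 0 < ρ)
    (hf : ∀ t ∈ Ioc 0 T, f t ≤ c * (t / T) ^ (ρ - 1)) :
    ∫⁻ t in Ioc 0 T, ENNReal.ofReal (f t) ≤ ENNReal.ofReal (c * (T / ρ)) := by
  calc ∫⁻ t in Ioc 0 T, ENNReal.ofReal (f t)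
      ≤ ∫⁻ t in Ioc 0 T, ENNReal.ofReal c * ENNReal.ofReal ((t / T) ^ (ρ - 1)) :=
        setLIntegral_mono' measurableSet_Ioc fun t ht => by
          rw [← ENNReal.ofReal_mul' (by have := ht.1; positivity)]
          exact ENNReal.ofReal_le_ofReal (hf t ht)
    _ = ENNReal.ofReal (c * (T / ρ)) := by
        rw [lintegral_const_mul' _ _ ENNReal.ofReal_ne_top, lintegral_Ioc_div_rpow hT hρ,
          ENNReal.ofReal_mul' (by positivity)]

theorem lintegral_Ioi_exp_neg_mul_le {l T : ℝ} (hl : 0 < l) (hT : 0 ≤ T) :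
    ∫⁻ t in Ioi T, ENNReal.ofReal (Real.exp (-(l * t))) ≤ ENNReal.ofReal l⁻¹ := by
  have hint : IntegrableOn (fun t => Real.exp (-l * t)) (Ioi T) := exp_neg_integrableOn_Ioi T hl
  simp only [← neg_mul]
  rw [← ofReal_integral_eq_lintegral_ofReal hint (ae_of_all _ fun t => (Real.exp_pos _).le),
    integral_exp_mul_Ioi (neg_lt_zero.mpr hl), neg_div_neg_eq, div_eq_mul_inv]
  refine ENNReal.ofReal_le_ofReal (mul_le_of_le_one_left (inv_nonneg.mpr hl.le) ?_)
  exact Real.exp_le_one_iff.mpr (mul_nonpos_of_nonpos_of_nonneg (neg_nonpos.mpr hl.le) hT)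

theorem setLIntegral_Ioi_exp_neg_mul_le {f : ℝ → ℝ} {l T c : ℝ} (hl : 0 < l) (hT : 0 ≤ T)
    (hf : ∀ t ∈ Ioi T, f t ≤ c) :
    ∫⁻ t in Ioi T, ENNReal.ofReal (Real.exp (-(l * t)) * f t) ≤ ENNReal.ofReal (c / l) := by
  calc ∫⁻ t in Ioi T, ENNReal.ofReal (Real.exp (-(l * t)) * f t)
      ≤ ∫⁻ t in Ioi T, ENNReal.ofReal c * ENNReal.ofReal (Real.exp (-(l * t))) :=
        setLIntegral_mono' measurableSet_Ioi fun t ht => by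
          rw [← ENNReal.ofReal_mul' (Real.exp_pos _).le, mul_comm c]
          exact ENNReal.ofReal_le_ofReal
            (mul_le_mul_of_nonneg_left (hf t ht) (Real.exp_pos _).le)
    _ ≤ ENNReal.ofReal c * ENNReal.ofReal l⁻¹ := by
        rw [lintegral_const_mul' _ _ ENNReal.ofReal_ne_top]
        gcongr
        exact lintegral_Ioi_exp_neg_mul_le hl hT
    _ = ENNReal.ofReal (c / l) := by
        rw [← ENNReal.ofReal_mul' (by positivity), div_eq_mul_inv]

def DilationLE (κ : ℝ → ℝ) (s c : ℝ) : Prop :=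
  ∀ t, 0 < t → κ (s * t) ≤ c * κ t

namespace DilationLE

variable {κ : ℝ → ℝ} {s s' c c' : ℝ}

theorem of_sPhi_le (hκ : ∀ t ∈ Set.Ioi (0:ℝ), 0 < κ t) (hc : 0 ≤ c)
    (h : sPhi κ s ≤ ENNReal.ofReal c) : DilationLE κ s c := by
  intro t ht
  have hle : ENNReal.ofReal (κ (s * t) / κ t) ≤ sPhi κ s :=
    le_iSup₂ (f := fun t (_ : t ∈ Set.Ioi (0:ℝ)) => ENNReal.ofReal (κ (s * t) / κ t)) t ht
  rw [← div_le_iff₀ (hκ t ht)]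
  exact (ENNReal.ofReal_le_ofReal_iff hc).mp (hle.trans h)

theorem mul (h : DilationLE κ s c) (h' : DilationLE κ s' c') (hc : 0 ≤ c) (hs' : 0 < s') :
    DilationLE κ (s * s') (c * c') := fun t ht =>
  calc κ (s * s' * t) = κ (s * (s' * t)) := by rw [mul_assoc]
    _ ≤ c * κ (s' * t) := h _ (mul_pos hs' ht)
    _ ≤ c * (c' * κ t) := mul_le_mul_of_nonneg_left (h' t ht) hc
    _ = c * c' * κ t := (mul_assoc _ _ _).symm

theorem pow (h : DilationLE κ s c) (hc : 0 ≤ c) (hs : 0 < s) (n : ℕ) :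
    DilationLE κ (s ^ n) (c ^ n) := by
  induction n with
  | zero => intro t _; simp
  | succ n ih => simpa only [pow_succ] using ih.mul h (pow_nonneg hc n) hs

theorem mono (hκ : ∀ t ∈ Set.Ioi (0:ℝ), 0 < κ t) (h : DilationLE κ s c) (hcc' : c ≤ c') :
    DilationLE κ s c' := fun t ht =>
  (h t ht).trans (mul_le_mul_of_nonneg_right hcc' (hκ t ht).le)

end DilationLE

namespace memIo

variable {κ : ℝ → ℝ} {a b : ℝ}

theorem exists_dilationLE_of_small (hκ : ∀ t ∈ Set.Ioi (0:ℝ), 0 < κ t) (h : memIo κ a b)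
    {ε : ℝ} (hε : 0 < ε) : ∃ δ > 0, ∀ s ∈ Ioo 0 δ, DilationLE κ s (ε * s ^ a) := by
  obtain ⟨δ, hδ, hs⟩ := h.1 ε hε
  exact ⟨δ, hδ, fun s hs' =>
    .of_sPhi_le hκ (by have := hs'.1; positivity) (hs s hs'.1 hs'.2)⟩

theorem exists_dilationLE_of_large (hκ : ∀ t ∈ Set.Ioi (0:ℝ), 0 < κ t) (h : memIo κ a b)
    {ε : ℝ} (hε : 0 < ε) : ∃ M > 0, ∀ s, M < s → DilationLE κ s (ε * s ^ b) := by
  obtain ⟨M, hs⟩ := h.2 ε hε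
  refine ⟨max M 1, by positivity, fun s hs' => ?_⟩
  have hs0 : 0 < s := lt_of_lt_of_le one_pos ((le_max_right M 1).trans hs'.le)
  exact .of_sPhi_le hκ (by positivity) (hs s ((le_max_left M 1).trans_lt hs'))

theorem exists_dilationLE_of_one_le (hκ : ∀ t ∈ Set.Ioi (0:ℝ), 0 < κ t) (h : memIo κ a 0) :
    ∃ c > 0, ∀ s, 1 ≤ s → DilationLE κ s c := by
  obtain ⟨δ, hδ, hsmall⟩ := h.exists_dilationLE_of_small hκ one_pos
  obtain ⟨M, hM, hlarge⟩ := h.exists_dilationLE_of_large hκ one_pos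
  set m := max M δ⁻¹ + 1
  have hMm : M < m := by linarith [le_max_left M δ⁻¹]
  have hm0 : 0 < m := hM.trans hMm
  have hinvm : m⁻¹ ∈ Ioo 0 δ :=
    ⟨inv_pos.mpr hm0, (inv_lt_comm₀ hm0 hδ).mpr (by linarith [le_max_right M δ⁻¹])⟩
  refine ⟨m⁻¹ ^ a, by have := hinvm.1; positivity, fun s hs => ?_⟩
  have hsm : M < s * m := by nlinarith
  simpa [mul_assoc, hm0.ne'] using
    (hlarge _ hsm).mul (hsmall _ hinvm) (by positivity) hinvm.1

theorem exists_dilationLE_rpow (hκ : ∀ t ∈ Set.Ioi (0:ℝ), 0 < κ t) (h : memIo κ (-1) 0) :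
    ∃ c > 0, ∃ ρ > (0:ℝ), ∀ s ∈ Ioc 0 1, DilationLE κ s (c * s ^ (ρ - 1)) := by
  obtain ⟨c, hc, hlarge⟩ := h.exists_dilationLE_of_one_le hκ
  obtain ⟨δ, hδ, hsmall⟩ := h.exists_dilationLE_of_small hκ (ε := 1 / 2) (by norm_num)
  set a := min (δ / 2) (1 / 2)
  have ha0 : 0 < a := by positivity
  have ha1 : a < 1 := (min_le_right _ _).trans_lt (by norm_num)
  have haδ : a < δ := (min_le_left _ _).trans_lt (by linarith)
  have hstep : DilationLE κ a (2 * a)⁻¹ := by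
    simpa [Real.rpow_neg_one, mul_comm] using hsmall a ⟨ha0, haδ⟩
  -- `ρ` is chosen so that one step `t ↦ a t` costs exactly the factor `a ^ (ρ - 1) = (2 a)⁻¹`.
  set ρ := Real.logb a (1 / 2)
  have hρ : 0 < ρ := Real.logb_pos_of_base_lt_one ha0 ha1 (by norm_num) (by norm_num)
  have haρ : a ^ ρ = 1 / 2 := Real.rpow_logb ha0 ha1.ne (by norm_num)
  refine ⟨c / a, by positivity, ρ, hρ, fun s ⟨hs0, hs1⟩ => ?_⟩
  obtain ⟨n, hn_lt, hn_le⟩ := exists_nat_pow_near_of_lt_one hs0 hs1 ha0 ha1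
  have hsplit : DilationLE κ (s / a ^ (n + 1) * a ^ (n + 1)) (c * (2 * a)⁻¹ ^ (n + 1)) :=
    (hlarge _ ((one_le_div (by positivity)).mpr hn_lt.le)).mul
      (hstep.pow (by positivity) ha0 _) hc.le (by positivity)
  rw [div_mul_cancel₀ _ (by positivity)] at hsplit
  refine hsplit.mono hκ ?_
  have hhalf : (1 / 2 : ℝ) ^ (n + 1) ≤ s ^ ρ := by
    rw [← haρ, ← Real.rpow_mul_natCast ha0.le, mul_comm, Real.rpow_natCast_mul ha0.le]
    exact Real.rpow_le_rpow (by positivity) hn_lt.le hρ.le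
  have hinv : (a ^ n)⁻¹ ≤ s⁻¹ := inv_anti₀ hs0 hn_le
  calc c * (2 * a)⁻¹ ^ (n + 1) = c / a * ((1 / 2) ^ (n + 1) * (a ^ n)⁻¹) := by
        simp only [one_div, mul_inv, mul_pow, inv_pow, pow_succ']; ring
    _ ≤ c / a * (s ^ ρ * s⁻¹) := by gcongr
    _ = c / a * s ^ (ρ - 1) := by rw [Real.rpow_sub_one hs0.ne', ← div_eq_mul_inv]

end memIo

section Laplace

variable {κ : ℝ → ℝ} {l : ℝ}

theorem lintegral_exp_neg_mul_le_of_dilationLE (hκ : ∀ t ∈ Set.Ioi (0:ℝ), 0 < κ t)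
    {b₁ b₂ ρ : ℝ} (hb₁ : 0 ≤ b₁) (hb₂ : 0 ≤ b₂) (hρ : 0 < ρ)
    (hsmall : ∀ s ∈ Ioc 0 1, DilationLE κ s (b₂ * s ^ (ρ - 1)))
    (hlarge : ∀ s, 1 ≤ s → DilationLE κ s b₁) (hl : 0 < l) :
    ∫⁻ t in Ioi 0, ENNReal.ofReal (Real.exp (-(l * t)) * κ t) ≤
      ENNReal.ofReal ((b₂ / ρ + b₁) * (κ l⁻¹ / l)) := by
  set T := l⁻¹
  have hT : 0 < T := inv_pos.mpr hl
  have hκT : 0 < κ T := hκ T hT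
  have hnear : ∫⁻ t in Ioc 0 T, ENNReal.ofReal (Real.exp (-(l * t)) * κ t) ≤
      ENNReal.ofReal (b₂ * κ T * (T / ρ)) := by
    refine setLIntegral_Ioc_le_of_le_mul_div_rpow hT hρ fun t ht => ?_
    have hκt : κ t ≤ b₂ * (t / T) ^ (ρ - 1) * κ T := by
      simpa [div_mul_cancel₀ _ hT.ne'] using
        hsmall (t / T) ⟨div_pos ht.1 hT, (div_le_one hT).mpr ht.2⟩ T hT
    calc Real.exp (-(l * t)) * κ t ≤ 1 * κ t := by
          gcongr
          · exact (hκ t ht.1).le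
          · exact Real.exp_le_one_iff.mpr (neg_nonpos.mpr (mul_pos hl ht.1).le)
      _ ≤ b₂ * κ T * (t / T) ^ (ρ - 1) := by linarith
  have hfar : ∫⁻ t in Ioi T, ENNReal.ofReal (Real.exp (-(l * t)) * κ t) ≤
      ENNReal.ofReal (b₁ * κ T / l) :=
    setLIntegral_Ioi_exp_neg_mul_le hl hT.le fun t ht => by
      simpa [div_mul_cancel₀ _ hT.ne'] using
        hlarge (t / T) ((one_le_div hT).mpr (le_of_lt ht)) T hT
  rw [← Ioc_union_Ioi_eq_Ioi hT.le, lintegral_union measurableSet_Ioi Ioc_disjoint_Ioi_same]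
  calc _ ≤ ENNReal.ofReal (b₂ * κ T * (T / ρ)) + ENNReal.ofReal (b₁ * κ T / l) :=
        add_le_add hnear hfar
    _ = ENNReal.ofReal ((b₂ / ρ + b₁) * (κ T / l)) := by
        rw [← ENNReal.ofReal_add (by positivity) (by positivity)]
        congr 1
        simp only [T]
        field_simp

theorem ofReal_le_lintegral_exp_neg_mul_of_dilationLE (hκ : ∀ t ∈ Set.Ioi (0:ℝ), 0 < κ t)
    {b : ℝ} (hb : 0 < b) (hlarge : ∀ s, 1 ≤ s → DilationLE κ s b) (hl : 0 < l) :
    ENNReal.ofReal ((b * Real.exp 1)⁻¹ * (κ l⁻¹ / l)) ≤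
      ∫⁻ t in Ioi 0, ENNReal.ofReal (Real.exp (-(l * t)) * κ t) := by
  set T := l⁻¹
  have hT : 0 < T := inv_pos.mpr hl
  have hlower : ∀ t ∈ Ioc 0 T, (b * Real.exp 1)⁻¹ * κ T ≤ Real.exp (-(l * t)) * κ t := by
    intro t ht
    have hκT : κ T ≤ b * κ t := by
      simpa [div_mul_cancel₀ _ ht.1.ne'] using
        hlarge (T / t) ((one_le_div ht.1).mpr ht.2) t ht.1
    have hlt : l * t ≤ 1 := by
      calc l * t ≤ l * T := by gcongr; exact ht.2
        _ = 1 := mul_inv_cancel₀ hl.ne'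
    calc (b * Real.exp 1)⁻¹ * κ T ≤ (b * Real.exp 1)⁻¹ * (b * κ t) := by gcongr
      _ = Real.exp (-1) * κ t := by rw [Real.exp_neg]; field_simp
      _ ≤ Real.exp (-(l * t)) * κ t := by
          gcongr
          exact (hκ t ht.1).le
  calc ENNReal.ofReal ((b * Real.exp 1)⁻¹ * (κ T / l))
      = ∫⁻ _ in Ioc 0 T, ENNReal.ofReal ((b * Real.exp 1)⁻¹ * κ T) := by
        rw [setLIntegral_const, Real.volume_Ioc, sub_zero,
          ← ENNReal.ofReal_mul' hT.le, div_eq_mul_inv, mul_assoc]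
    _ ≤ ∫⁻ t in Ioc 0 T, ENNReal.ofReal (Real.exp (-(l * t)) * κ t) :=
        setLIntegral_mono' measurableSet_Ioc fun t ht => ENNReal.ofReal_le_ofReal (hlower t ht)
    _ ≤ ∫⁻ t in Ioi 0, ENNReal.ofReal (Real.exp (-(l * t)) * κ t) :=
        lintegral_mono_set Ioc_subset_Ioi_self

end Laplace

/-- if `κ ∈ I_o(−1,0)` then its Laplace transform is finite on `(0,∞)` and
`L[κ](λ) ≃ κ(λ⁻¹)/λ` with uniform constants. -/
theorem laplace_equiv_of_memIo (κ : ℝ → ℝ) (hκ : ∀ t ∈ Set.Ioi (0:ℝ), 0 < κ t)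
    (h : memIo κ (-1) 0) :
    ∃ C > (0:ℝ), ∀ l > (0:ℝ),
      (∫⁻ t in Set.Ioi (0:ℝ), ENNReal.ofReal (Real.exp (-(l * t)) * κ t)) ≠ ⊤ ∧
      ENNReal.ofReal (C⁻¹ * (κ l⁻¹ / l)) ≤
        (∫⁻ t in Set.Ioi (0:ℝ), ENNReal.ofReal (Real.exp (-(l * t)) * κ t)) ∧
      (∫⁻ t in Set.Ioi (0:ℝ), ENNReal.ofReal (Real.exp (-(l * t)) * κ t)) ≤
        ENNReal.ofReal (C * (κ l⁻¹ / l)) := by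
  obtain ⟨b₁, hb₁, hlarge⟩ := h.exists_dilationLE_of_one_le hκ
  obtain ⟨b₂, hb₂, ρ, hρ, hsmall⟩ := h.exists_dilationLE_rpow hκ
  refine ⟨b₂ / ρ + b₁ + b₁ * Real.exp 1, by positivity, fun l hl => ?_⟩
  have hupper := lintegral_exp_neg_mul_le_of_dilationLE hκ hb₁.le hb₂.le hρ hsmall hlarge hl
  have hlower := ofReal_le_lintegral_exp_neg_mul_of_dilationLE hκ hb₁ hlarge hl
  have hq : 0 ≤ κ l⁻¹ / l := div_nonneg (hκ _ (inv_pos.mpr hl)).le hl.le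
  refine ⟨ne_top_of_le_ne_top ENNReal.ofReal_ne_top hupper, le_trans ?_ hlower, hupper.trans ?_⟩
  · gcongr
    linarith [div_pos hb₂ hρ]
  · gcongr ENNReal.ofReal (?_ * _)
    linarith [mul_pos hb₁ (Real.exp_pos 1)]
end

section
/- Let κ: (0,∞) → (0,∞) be a decreasing function whose Laplace transform L[κ] belongs to I_o(−1,0). Then L[κ](λ) ≃ κ(λ^{−1})/λ for all λ > 0; in particular κ ∈ I_o(−1,0). -/
/-! Write `L = L[κ]` and `K(x) = ∫₀ˣ κ`. Since `κ` is positive and decreasing,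
`x κ(x) ≤ K(x) ≤ e L(1/x)` and `L(l) ≤ K(x) + κ(x)/l` for all `x, l > 0`. As `s_L(μ) = o(1)`,
some `μ` has `s_L(μ) ≤ 1/(2e)`, and then
`L(1/x) ≤ L(1/(μx))/(2e) ≤ (e L(1/x) + μ x κ(x))/(2e)`, i.e. `L(1/x) ≤ (μ/e) x κ(x)`.
So `κ(t)` is comparable to `L(1/t)/t`; the substitution `t ↦ 1/t` carries `L ∈ I_o(-1,0)` to
`t ↦ L(1/t)/t ∈ I_o(-1,0)`, and membership passes to the comparable function `κ`. -/

open Real MeasureTheory Set Filter ENNReal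

lemma sPhi_le_ofReal_iff {φ : ℝ → ℝ} (hφ : ∀ t > 0, 0 < φ t) {l c : ℝ} (hc : 0 ≤ c) :
    sPhi φ l ≤ ENNReal.ofReal c ↔ ∀ t > 0, φ (l * t) ≤ c * φ t := by
  simp only [sPhi, iSup₂_le_iff, mem_Ioi, ENNReal.ofReal_le_ofReal_iff hc]
  exact forall₂_congr fun t ht => div_le_iff₀ (hφ t ht)

lemma sPhi_le_of_comparable {φ ψ : ℝ → ℝ} (hφ : ∀ t > 0, 0 < φ t) {C : ℝ} (hC : 0 < C)
    (hcmp : ∀ t > 0, φ t ≤ C * ψ t ∧ ψ t ≤ C * φ t) {l c : ℝ} (hl : 0 < l) (hc : 0 ≤ c)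
    (hψ : sPhi ψ l ≤ ENNReal.ofReal c) : sPhi φ l ≤ ENNReal.ofReal (C ^ 2 * c) := by
  have hψpos : ∀ t > 0, 0 < ψ t := fun t ht =>
    pos_of_mul_pos_right ((hφ t ht).trans_le (hcmp t ht).1) hC.le
  rw [sPhi_le_ofReal_iff hψpos hc] at hψ
  rw [sPhi_le_ofReal_iff hφ (by positivity)]
  intro t ht
  calc φ (l * t) ≤ C * ψ (l * t) := (hcmp _ (mul_pos hl ht)).1
    _ ≤ C * (c * (C * φ t)) := by gcongr; exact (hψ t ht).trans (by gcongr; exact (hcmp t ht).2)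
    _ = C ^ 2 * c * φ t := by ring

lemma memIo_of_comparable {φ ψ : ℝ → ℝ} (hφ : ∀ t > 0, 0 < φ t) {C : ℝ} (hC : 0 < C)
    (hcmp : ∀ t > 0, φ t ≤ C * ψ t ∧ ψ t ≤ C * φ t) {a b : ℝ} (hψ : memIo ψ a b) :
    memIo φ a b := by
  have key : ∀ {l ε e : ℝ}, 0 < l → 0 < ε → sPhi ψ l ≤ ENNReal.ofReal (ε / C ^ 2 * l ^ e) →
      sPhi φ l ≤ ENNReal.ofReal (ε * l ^ e) := fun hl hε h => by
    convert sPhi_le_of_comparable hφ hC hcmp hl (by positivity) h using 2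
    field_simp
  refine ⟨fun ε hε => ?_, fun ε hε => ?_⟩
  · obtain ⟨δ, hδ, h⟩ := hψ.1 (ε / C ^ 2) (by positivity)
    exact ⟨δ, hδ, fun l hl hlδ => key hl hε (h l hl hlδ)⟩
  · obtain ⟨M, h⟩ := hψ.2 (ε / C ^ 2) (by positivity)
    exact ⟨max M 0, fun l hl => key ((le_max_right _ _).trans_lt hl) hε
      (h l ((le_max_left _ _).trans_lt hl))⟩

lemma sPhi_inv_div_le {φ : ℝ → ℝ} (hφ : ∀ t > 0, 0 < φ t) {l c : ℝ} (hl : 0 < l) (hc : 0 ≤ c)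
    (h : sPhi φ l⁻¹ ≤ ENNReal.ofReal c) :
    sPhi (fun t => φ t⁻¹ / t) l ≤ ENNReal.ofReal (c / l) := by
  rw [sPhi_le_ofReal_iff hφ hc] at h
  rw [sPhi_le_ofReal_iff (fun t ht => div_pos (hφ _ (inv_pos.2 ht)) ht) (by positivity)]
  intro t ht
  calc φ (l * t)⁻¹ / (l * t) ≤ c * φ t⁻¹ / (l * t) := by
        rw [mul_inv]; gcongr; exact h _ (inv_pos.2 ht)
    _ = c / l * (φ t⁻¹ / t) := by field_simp

lemma memIo_inv_div {φ : ℝ → ℝ} (hφ : ∀ t > 0, 0 < φ t) {a b : ℝ} (h : memIo φ a b) :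
    memIo (fun t => φ t⁻¹ / t) (-1 - b) (-1 - a) := by
  have key : ∀ {l ε e : ℝ}, 0 < l → 0 < ε → sPhi φ l⁻¹ ≤ ENNReal.ofReal (ε * l⁻¹ ^ e) →
      sPhi (fun t => φ t⁻¹ / t) l ≤ ENNReal.ofReal (ε * l ^ (-1 - e)) := fun hl hε h => by
    convert sPhi_inv_div_le hφ hl (by positivity) h using 2
    rw [Real.inv_rpow hl.le, Real.rpow_sub hl, Real.rpow_neg_one]
    field_simp
  refine ⟨fun ε hε => ?_, fun ε hε => ?_⟩
  · obtain ⟨M, hM⟩ := h.2 ε hε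
    refine ⟨(max M 1)⁻¹, by positivity, fun l hl hlδ => key hl hε (hM _ ?_)⟩
    exact (le_max_left _ _).trans_lt ((lt_inv_comm₀ hl (by positivity)).1 hlδ)
  · obtain ⟨δ, hδ, hM⟩ := h.1 ε hε
    refine ⟨δ⁻¹, fun l hl => ?_⟩
    have hl0 : 0 < l := (inv_pos.2 hδ).trans hl
    exact key hl0 hε (hM _ (inv_pos.2 hl0) ((inv_lt_comm₀ hδ hl0).1 hl))

noncomputable def laplace (κ : ℝ → ℝ) (l : ℝ) : ℝ :=
  ∫ t in Ioi 0, exp (-(l * t)) * κ t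

section Laplace

variable {κ : ℝ → ℝ}

lemma integrableOn_Ioc_of_integrableOn_exp_mul {l : ℝ}
    (hint : IntegrableOn (fun t => exp (-(l * t)) * κ t) (Ioi 0)) (x : ℝ) :
    IntegrableOn κ (Ioc 0 x) := by
  have hbdd : ∀ t ∈ Ioc 0 x, ‖exp (l * t)‖ ≤ exp (|l| * |x|) := fun t ht => by
    rw [Real.norm_eq_abs, abs_of_pos (exp_pos _), exp_le_exp]
    calc l * t ≤ |l * t| := le_abs_self _
      _ ≤ |l| * |x| := by
        rw [abs_mul, abs_of_pos ht.1]; gcongr; exact ht.2.trans (le_abs_self x)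
  have h := (hint.mono_set Ioc_subset_Ioi_self).bdd_mul (continuous_exp.comp
    (continuous_const_mul l)).aestronglyMeasurable
    ((ae_restrict_iff' measurableSet_Ioc).2 (ae_of_all _ hbdd))
  refine IntegrableOn.congr_fun h (fun t _ => ?_) measurableSet_Ioc
  simp only [Function.comp_apply, ← mul_assoc, ← exp_add, add_neg_cancel, exp_zero, one_mul]

lemma AntitoneOn.mul_le_integral_Ioc (hanti : AntitoneOn κ (Ioi 0)) {x : ℝ} (hx : 0 < x)
    (hint : IntegrableOn κ (Ioc 0 x)) : x * κ x ≤ ∫ t in Ioc 0 x, κ t := by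
  have h := setIntegral_mono_on (integrableOn_const (by simp)) hint measurableSet_Ioc
    (fun t ht => hanti ht.1 hx ht.2)
  simpa [Real.volume_Ioc, hx.le] using h

variable (hpos : ∀ t > 0, 0 < κ t)
  (hint : ∀ l > 0, IntegrableOn (fun t => exp (-(l * t)) * κ t) (Ioi 0))
include hpos hint

lemma integral_Ioc_le_exp_mul_laplace {l x : ℝ} (hl : 0 < l) :
    ∫ t in Ioc 0 x, κ t ≤ exp (l * x) * laplace κ l := by
  have hmono : ∫ t in Ioc 0 x, exp (-(l * t)) * κ t ≤ laplace κ l :=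
    setIntegral_mono_set (hint l hl)
      ((ae_restrict_iff' measurableSet_Ioi).2 (ae_of_all _ fun t ht =>
        mul_nonneg (exp_pos _).le (hpos t ht).le))
      Ioc_subset_Ioi_self.eventuallyLE
  calc ∫ t in Ioc 0 x, κ t = exp (l * x) * ∫ t in Ioc 0 x, exp (-(l * x)) * κ t := by
        rw [integral_const_mul, ← mul_assoc, ← exp_add, add_neg_cancel, exp_zero, one_mul]
    _ ≤ exp (l * x) * ∫ t in Ioc 0 x, exp (-(l * t)) * κ t := by
        refine mul_le_mul_of_nonneg_left (setIntegral_mono_on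
          ((integrableOn_Ioc_of_integrableOn_exp_mul (hint l hl) x).const_mul _)
          ((hint l hl).mono_set Ioc_subset_Ioi_self) measurableSet_Ioc fun t ht => ?_)
          (exp_pos _).le
        gcongr
        · exact (hpos t ht.1).le
        · exact ht.2
    _ ≤ exp (l * x) * laplace κ l := by gcongr

lemma laplace_le_integral_Ioc_add (hanti : AntitoneOn κ (Ioi 0)) {l x : ℝ} (hl : 0 < l)
    (hx : 0 < x) : laplace κ l ≤ (∫ t in Ioc 0 x, κ t) + κ x / l := by
  have hhead : ∫ t in Ioc 0 x, exp (-(l * t)) * κ t ≤ ∫ t in Ioc 0 x, κ t :=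
    setIntegral_mono_on ((hint l hl).mono_set Ioc_subset_Ioi_self)
      (integrableOn_Ioc_of_integrableOn_exp_mul (hint l hl) x) measurableSet_Ioc fun t ht =>
        mul_le_of_le_one_left (hpos t ht.1).le
          (exp_le_one_iff.2 (neg_nonpos.2 (mul_pos hl ht.1).le))
  have hexp : ∫ t in Ioi x, exp (-(l * t)) = exp (-(l * x)) / l := by
    simpa [neg_mul, neg_div_neg_eq] using integral_exp_mul_Ioi (neg_neg_of_pos hl) x
  have htail : ∫ t in Ioi x, exp (-(l * t)) * κ t ≤ κ x / l := by
    calc ∫ t in Ioi x, exp (-(l * t)) * κ t ≤ ∫ t in Ioi x, exp (-(l * t)) * κ x := by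
          refine setIntegral_mono_on ((hint l hl).mono_set (Ioi_subset_Ioi hx.le))
            ?_ measurableSet_Ioi fun t ht =>
              mul_le_mul_of_nonneg_left (hanti hx (hx.trans ht) ht.le) (exp_pos _).le
          have h := (exp_neg_integrableOn_Ioi x hl).mul_const (κ x)
          simp only [neg_mul] at h
          exact h
      _ = exp (-(l * x)) * (κ x / l) := by rw [integral_mul_const, hexp]; ring
      _ ≤ κ x / l := mul_le_of_le_one_left (div_pos (hpos x hx) hl).le
          (exp_le_one_iff.2 (neg_nonpos.2 (mul_pos hl hx).le))
  have hsplit : laplace κ l = (∫ t in Ioc 0 x, exp (-(l * t)) * κ t)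
      + ∫ t in Ioi x, exp (-(l * t)) * κ t := by
    rw [← setIntegral_union Ioc_disjoint_Ioi_same measurableSet_Ioi
      ((hint l hl).mono_set Ioc_subset_Ioi_self) ((hint l hl).mono_set (Ioi_subset_Ioi hx.le)),
      Ioc_union_Ioi_eq_Ioi hx.le, laplace]
  linarith

lemma mul_le_exp_one_mul_laplace_inv (hanti : AntitoneOn κ (Ioi 0)) {x : ℝ} (hx : 0 < x) :
    x * κ x ≤ exp 1 * laplace κ x⁻¹ := by
  have h := integral_Ioc_le_exp_mul_laplace hpos hint (x := x) (inv_pos.2 hx)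
  rw [inv_mul_cancel₀ hx.ne'] at h
  exact (hanti.mul_le_integral_Ioc hx
    (integrableOn_Ioc_of_integrableOn_exp_mul (hint 1 one_pos) x)).trans h

lemma laplace_pos (hanti : AntitoneOn κ (Ioi 0)) {l : ℝ} (hl : 0 < l) : 0 < laplace κ l := by
  have h := mul_le_exp_one_mul_laplace_inv hpos hint hanti (inv_pos.2 hl)
  rw [inv_inv] at h
  exact pos_of_mul_pos_right ((mul_pos (inv_pos.2 hl) (hpos _ (inv_pos.2 hl))).trans_le h)
    (exp_pos 1).le

lemma laplace_inv_le_mul (hanti : AntitoneOn κ (Ioi 0)) {μ : ℝ} (hμ : 0 < μ)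
    (hs : sPhi (laplace κ) μ ≤ ENNReal.ofReal (2 * exp 1)⁻¹) {x : ℝ} (hx : 0 < x) :
    laplace κ x⁻¹ ≤ μ / exp 1 * (x * κ x) := by
  have hμx : 0 < (μ * x)⁻¹ := inv_pos.2 (mul_pos hμ hx)
  have hscale : 2 * exp 1 * laplace κ x⁻¹ ≤ laplace κ (μ * x)⁻¹ := by
    have h := (sPhi_le_ofReal_iff (fun _ => laplace_pos hpos hint hanti) (by positivity)).1 hs
      _ hμx
    rwa [show μ * (μ * x)⁻¹ = x⁻¹ by field_simp, le_inv_mul_iff₀ (by positivity)] at h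
  have hsplit := laplace_le_integral_Ioc_add hpos hint hanti hμx hx
  have hhead := integral_Ioc_le_exp_mul_laplace hpos hint (x := x) (inv_pos.2 hx)
  rw [inv_mul_cancel₀ hx.ne'] at hhead
  rw [div_inv_eq_mul] at hsplit
  rw [div_mul_eq_mul_div, le_div_iff₀ (exp_pos 1)]
  linarith

lemma exists_laplace_inv_comparable (hanti : AntitoneOn κ (Ioi 0)) {μ : ℝ} (hμ : 0 < μ)
    (hs : sPhi (laplace κ) μ ≤ ENNReal.ofReal (2 * exp 1)⁻¹) :
    ∃ C > 0, ∀ x > 0, x * κ x ≤ C * laplace κ x⁻¹ ∧ laplace κ x⁻¹ ≤ C * (x * κ x) := by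
  refine ⟨max (exp 1) (μ / exp 1), by positivity, fun x hx => ⟨?_, ?_⟩⟩
  · refine (mul_le_exp_one_mul_laplace_inv hpos hint hanti hx).trans ?_
    gcongr
    exacts [(laplace_pos hpos hint hanti (inv_pos.2 hx)).le, le_max_left _ _]
  · refine (laplace_inv_le_mul hpos hint hanti hμ hs hx).trans ?_
    gcongr
    exacts [(mul_pos hx (hpos x hx)).le, le_max_right _ _]

end Laplace

/-- if `κ` is positive and decreasing on `(0,∞)` with Laplace transform
`L[κ]` finite on `(0,∞)` and `L[κ] ∈ I_o(−1,0)`, then `L[κ](λ) ≃ κ(λ⁻¹)/λ` for all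
`λ > 0`; in particular `κ ∈ I_o(−1,0)`. -/
theorem laplace_equiv_of_antitone (κ : ℝ → ℝ) (hκpos : ∀ t ∈ Set.Ioi (0:ℝ), 0 < κ t)
    (hanti : AntitoneOn κ (Set.Ioi 0))
    (hint : ∀ l > (0:ℝ), IntegrableOn (fun t => Real.exp (-(l * t)) * κ t) (Set.Ioi 0))
    (hL : memIo (fun l => ∫ t in Set.Ioi (0:ℝ), Real.exp (-(l * t)) * κ t) (-1) 0) :
    (∃ C > (0:ℝ), ∀ l > (0:ℝ),
      C⁻¹ * (κ l⁻¹ / l) ≤ (∫ t in Set.Ioi (0:ℝ), Real.exp (-(l * t)) * κ t) ∧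
      (∫ t in Set.Ioi (0:ℝ), Real.exp (-(l * t)) * κ t) ≤ C * (κ l⁻¹ / l)) ∧
    memIo κ (-1) 0 := by
  have hpos : ∀ t > 0, 0 < κ t := hκpos
  change memIo (laplace κ) (-1) 0 at hL
  obtain ⟨M, hM⟩ := hL.2 (2 * exp 1)⁻¹ (by positivity)
  have hμ : 0 < max M 0 + 1 := by positivity
  have hs : sPhi (laplace κ) (max M 0 + 1) ≤ ENNReal.ofReal (2 * exp 1)⁻¹ := by
    simpa using hM _ ((le_max_left M 0).trans_lt (lt_add_one _))
  obtain ⟨C, hC, hcmp⟩ := exists_laplace_inv_comparable hpos hint hanti hμ hs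
  refine ⟨⟨C, hC, fun l hl => ?_⟩, ?_⟩
  · obtain ⟨hlow, hup⟩ := hcmp l⁻¹ (inv_pos.2 hl)
    rw [inv_inv] at hlow hup
    rw [div_eq_inv_mul, inv_mul_le_iff₀ hC]
    exact ⟨hlow, hup⟩
  · have hLψ := memIo_inv_div (fun _ => laplace_pos hpos hint hanti) hL
    norm_num at hLψ
    refine memIo_of_comparable hpos hC (fun t ht => ?_) hLψ
    obtain ⟨hlow, hup⟩ := hcmp t ht
    rw [mul_div_assoc', le_div_iff₀ ht, div_le_iff₀ ht]
    constructor <;> linarith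
end
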